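/- For the regular icosahedral coordination geometry whose 12 bonds are the normalized cyclic permutations of (0, ±1, ±φ) with φ the golden ratio, the set of inner products ⟨b, b'⟩ over distinct bond pairs equals {1/√5, −1/√5, −1}; hence m = 3, n = 66, and E = log₂ 22. -/

import Mathlib

open scoped RealInnerProductSpace

noncomputable def v3 (a b c : ℝ) : EuclideanSpace ℝ (Fin 3) := (WithLp.equiv 2 _).symm ![a, b, c]

/-- The golden ratio. -/
noncomputable def φ : ℝ := (1 + Real.sqrt 5) / 2

/-- A normalized icosahedral bond `(a,b,c)/√(1+φ²)`. -/
noncomputable def icov (a b c : ℝ) : EuclideanSpace ℝ (Fin 3) :=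
  (Real.sqrt (1 + φ ^ 2))⁻¹ • v3 a b c

/-- The regular icosahedral coordination geometry: the 12 normalized cyclic permutations
of `(0, ±1, ±φ)`. -/
noncomputable def icoS : Set (EuclideanSpace ℝ (Fin 3)) :=
  {icov 0 1 φ, icov 0 1 (-φ), icov 0 (-1) φ, icov 0 (-1) (-φ),
   icov 1 φ 0, icov 1 (-φ) 0, icov (-1) φ 0, icov (-1) (-φ) 0,
   icov φ 0 1, icov (-φ) 0 1, icov φ 0 (-1), icov (-φ) 0 (-1)}

/-- Set of bond angles of a coordination geometry. -/
def angleSet (S : Set (EuclideanSpace ℝ (Fin 3))) : Set ℝ :=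
  {θ | ∃ b ∈ S, ∃ b' ∈ S, b ≠ b' ∧ θ = Real.arccos ⟪b, b'⟫}

/-!
The twelve bonds are unit vectors, so two of them are distinct exactly when their inner product
is not `1`. Before normalization by `1 + φ²`, the bonds `(0, ±1, ±φ)` and their cyclic shifts have
inner products `±(1 + φ²)` and `±φ`, using `φ² = φ + 1`; the identity `1 + φ² = √5 φ` turns
`φ / (1 + φ²)` into `1 / √5`. As `arccos` is injective on `[-1, 1]`, the three inner products give
three distinct angles.
-/

open Set

lemma setOf_inner_of_ne_eq_image2_diff {E : Type*} [NormedAddCommGroup E] [InnerProductSpace ℝ E]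
    {S : Set E} (hS : ∀ b ∈ S, ‖b‖ = 1) :
    {x : ℝ | ∃ b ∈ S, ∃ b' ∈ S, b ≠ b' ∧ x = ⟪b, b'⟫} = image2 (inner ℝ) S S \ {1} := by
  ext x
  constructor
  · rintro ⟨b, hb, b', hb', hne, rfl⟩
    exact ⟨⟨b, hb, b', hb', rfl⟩,
      fun h ↦ hne ((inner_eq_one_iff_of_norm_eq_one (hS b hb) (hS b' hb')).mp h)⟩
  · rintro ⟨⟨b, hb, b', hb', rfl⟩, h⟩
    exact ⟨b, hb, b', hb',
      fun e ↦ h ((inner_eq_one_iff_of_norm_eq_one (hS b hb) (hS b' hb')).mpr e), rfl⟩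

lemma angleSet_eq_image (S : Set (EuclideanSpace ℝ (Fin 3))) :
    angleSet S = Real.arccos '' {x : ℝ | ∃ b ∈ S, ∃ b' ∈ S, b ≠ b' ∧ x = ⟪b, b'⟫} := by
  ext θ
  constructor
  · rintro ⟨b, hb, b', hb', hne, rfl⟩
    exact ⟨_, ⟨b, hb, b', hb', hne, rfl⟩, rfl⟩
  · rintro ⟨_, ⟨b, hb, b', hb', hne, rfl⟩, rfl⟩
    exact ⟨b, hb, b', hb', hne, rfl⟩

lemma ncard_arccos_image_eq_three {a b c : ℝ} (ha : a ∈ Icc (-1) 1) (hb : b ∈ Icc (-1) 1)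
    (hc : c ∈ Icc (-1) 1) (hab : a ≠ b) (hac : a ≠ c) (hbc : b ≠ c) :
    (Real.arccos '' {a, b, c}).ncard = 3 := by
  rw [(Real.arccos_injOn.mono (by simp [insert_subset_iff, ha, hb, hc])).ncard_image]
  exact ncard_eq_three.mpr ⟨a, b, c, hab, hac, hbc, rfl⟩

lemma phi_ne_zero : φ ≠ 0 := Real.goldenRatio_ne_zero

lemma phi_sq : φ ^ 2 = φ + 1 := Real.goldenRatio_sq

lemma one_add_phi_sq : 1 + φ ^ 2 = Real.sqrt 5 * φ := by
  rw [phi_sq, φ]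
  linear_combination (-1 / 2 : ℝ) * Real.sq_sqrt (show (0 : ℝ) ≤ 5 by norm_num)

lemma one_add_phi_sq_pos : 0 < 1 + φ ^ 2 := by positivity

lemma inv_sqrt_five_pos : 0 < (Real.sqrt 5)⁻¹ := by positivity

lemma inv_sqrt_five_lt_one : (Real.sqrt 5)⁻¹ < 1 :=
  inv_lt_one_of_one_lt₀ (by rw [Real.lt_sqrt zero_le_one]; norm_num)

lemma inner_icov (a b c a' b' c' : ℝ) :
    ⟪icov a b c, icov a' b' c'⟫ = (a * a' + b * b' + c * c') / (1 + φ ^ 2) := by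
  simp only [icov, v3, inner_smul_left, inner_smul_right, PiLp.inner_apply,
    WithLp.equiv_symm_apply, RCLike.inner_apply, conj_trivial, map_inv₀,
    Fin.sum_univ_three, Matrix.cons_val_zero, Matrix.cons_val_one, Matrix.cons_val_two,
    Matrix.head_cons, Matrix.tail_cons]
  rw [← mul_assoc, ← mul_inv, Real.mul_self_sqrt one_add_phi_sq_pos.le]
  ring

lemma phi_div_one_add_phi_sq : φ / (1 + φ ^ 2) = (Real.sqrt 5)⁻¹ := by
  rw [one_add_phi_sq, div_mul_cancel_right₀ phi_ne_zero]

lemma div_one_add_phi_sq_mem {d : ℝ}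
    (hd : d ∈ ({1 + φ ^ 2, φ, -φ, -(1 + φ ^ 2)} : Set ℝ)) :
    d / (1 + φ ^ 2) ∈ ({1, (Real.sqrt 5)⁻¹, -(Real.sqrt 5)⁻¹, -1} : Set ℝ) := by
  have h : 1 + φ ^ 2 ≠ 0 := one_add_phi_sq_pos.ne'
  rcases hd with rfl | rfl | rfl | rfl
  · exact Or.inl (div_self h)
  · exact Or.inr (Or.inl phi_div_one_add_phi_sq)
  · exact Or.inr (Or.inr (Or.inl (by rw [neg_div, phi_div_one_add_phi_sq])))
  · exact Or.inr (Or.inr (Or.inr (by rw [neg_div, div_self h]; rfl)))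

lemma inner_mem_of_mem_icoS {b b' : EuclideanSpace ℝ (Fin 3)} (hb : b ∈ icoS)
    (hb' : b' ∈ icoS) :
    ⟪b, b'⟫ ∈ ({1, (Real.sqrt 5)⁻¹, -(Real.sqrt 5)⁻¹, -1} : Set ℝ) := by
  simp only [icoS, mem_insert_iff, mem_singleton_iff] at hb hb'
  rcases hb with rfl|rfl|rfl|rfl|rfl|rfl|rfl|rfl|rfl|rfl|rfl|rfl <;>
    rcases hb' with rfl|rfl|rfl|rfl|rfl|rfl|rfl|rfl|rfl|rfl|rfl|rfl <;>
    rw [inner_icov] <;> apply div_one_add_phi_sq_mem <;>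
    simp only [mem_insert_iff, mem_singleton_iff] <;>
    grind [phi_sq]

lemma norm_icov {a b c : ℝ} (h : a * a + b * b + c * c = 1 + φ ^ 2) : ‖icov a b c‖ = 1 := by
  have hsq : ‖icov a b c‖ ^ 2 = 1 := by
    rw [← real_inner_self_eq_norm_sq, inner_icov, h, div_self one_add_phi_sq_pos.ne']
  exact (pow_eq_one_iff_of_nonneg (norm_nonneg _) two_ne_zero).mp hsq

lemma norm_eq_one_of_mem_icoS {b : EuclideanSpace ℝ (Fin 3)} (hb : b ∈ icoS) : ‖b‖ = 1 := by
  simp only [icoS, mem_insert_iff, mem_singleton_iff] at hb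
  rcases hb with rfl|rfl|rfl|rfl|rfl|rfl|rfl|rfl|rfl|rfl|rfl|rfl <;> exact norm_icov (by ring)

lemma image2_inner_icoS :
    image2 (inner ℝ) icoS icoS = {1, (Real.sqrt 5)⁻¹, -(Real.sqrt 5)⁻¹, -1} := by
  refine Subset.antisymm ?_ ?_
  · rintro _ ⟨b, hb, b', hb', rfl⟩
    exact inner_mem_of_mem_icoS hb hb'
  have h : 1 + φ ^ 2 ≠ 0 := one_add_phi_sq_pos.ne'
  have h₁ : icov 0 1 φ ∈ icoS := by simp [icoS]
  rintro x (rfl | rfl | rfl | rfl)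
  · refine ⟨_, h₁, _, h₁, ?_⟩
    rw [inner_icov, div_eq_one_iff_eq h]
    ring
  · refine ⟨_, h₁, icov 1 φ 0, by simp [icoS], ?_⟩
    rw [inner_icov, ← phi_div_one_add_phi_sq]
    ring
  · refine ⟨_, h₁, icov (-1) (-φ) 0, by simp [icoS], ?_⟩
    rw [inner_icov, ← phi_div_one_add_phi_sq]
    ring
  · refine ⟨_, h₁, icov 0 (-1) (-φ), by simp [icoS], ?_⟩
    rw [inner_icov, div_eq_iff h]
    ring

lemma setOf_inner_icoS_of_ne :
    {x : ℝ | ∃ b ∈ icoS, ∃ b' ∈ icoS, b ≠ b' ∧ x = ⟪b, b'⟫} =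
      {(Real.sqrt 5)⁻¹, -(Real.sqrt 5)⁻¹, -1} := by
  have h₀ := inv_sqrt_five_pos
  have h₁ := inv_sqrt_five_lt_one
  rw [setOf_inner_of_ne_eq_image2_diff (fun _ ↦ norm_eq_one_of_mem_icoS), image2_inner_icoS,
    insert_sdiff_of_mem _ (mem_singleton 1), sdiff_singleton_eq_self]
  simp only [mem_insert_iff, mem_singleton_iff, not_or]
  refine ⟨?_, ?_, ?_⟩ <;> linarith

lemma ncard_angleSet_icoS : (angleSet icoS).ncard = 3 := by
  have h₀ := inv_sqrt_five_pos
  have h₁ := inv_sqrt_five_lt_one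
  rw [angleSet_eq_image, setOf_inner_icoS_of_ne]
  refine ncard_arccos_image_eq_three ⟨?_, ?_⟩ ⟨?_, ?_⟩ ⟨?_, ?_⟩ ?_ ?_ ?_ <;>
    linarith

/-- The inner products over distinct icosahedral bond pairs are exactly
`{1/√5, −1/√5, −1}`; hence `m = 3`, `n = 66`, and `E = log₂ 22`. -/
theorem icosahedral_angles :
    {x : ℝ | ∃ b ∈ icoS, ∃ b' ∈ icoS, b ≠ b' ∧ x = ⟪b, b'⟫} =
      {(Real.sqrt 5)⁻¹, -(Real.sqrt 5)⁻¹, -1} ∧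
    (angleSet icoS).ncard = 3 ∧
    Real.logb 2 66 - Real.logb 2 ((angleSet icoS).ncard) = Real.logb 2 22 := by
  refine ⟨setOf_inner_icoS_of_ne, ncard_angleSet_icoS, ?_⟩
  rw [ncard_angleSet_icoS, Nat.cast_ofNat, ← Real.logb_div (by norm_num) (by norm_num)]
  norm_num
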